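/- arXiv:2402.14752 — 3 statements merged into one kernel-verified Lean document; each statement's English description precedes it below -/
import Mathlib

section
/- Let G be a finite simple graph on a nonempty vertex set V that is vertex-transitive. Then the infimum, over all real vectors J ∈ ℝ^V with Σ_α J_α² = 1 and all H-feasible pairs (v, M) for G, of the inner product Σ_α J_α v_α, is equal to −√(ϑ(G)). -/
open scoped BigOperators

/-- A theta-feasible matrix for `G`: real symmetric PSD with trace 1 and vanishing on edges. -/
def ThetaFeasible {V : Type*} [Fintype V] (G : SimpleGraph V) (M : Matrix V V ℝ) : Prop :=
  M.IsSymm ∧ M.PosSemidef ∧ M.trace = 1 ∧ ∀ a b, G.Adj a b → M a b = 0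

/-- The Lovász theta function of `G`. -/
noncomputable def lovaszTheta {V : Type*} [Fintype V] (G : SimpleGraph V) : ℝ :=
  sSup {x : ℝ | ∃ M : Matrix V V ℝ, ThetaFeasible G M ∧ x = ∑ a, ∑ b, M a b}

/-- An H²-feasible matrix for `G`: real symmetric PSD, unit diagonal, vanishing on edges. -/
def H2Feasible {V : Type*} [Fintype V] (G : SimpleGraph V) (M : Matrix V V ℝ) : Prop :=
  M.IsSymm ∧ M.PosSemidef ∧ (∀ a, M a a = 1) ∧ ∀ a b, G.Adj a b → M a b = 0

/-- The block matrix N = [[1, vᵀ],[v, M]]. -/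
def blockN {V : Type*} [Fintype V] [DecidableEq V] (v : V → ℝ) (M : Matrix V V ℝ) :
    Matrix (Unit ⊕ V) (Unit ⊕ V) ℝ :=
  Matrix.fromBlocks 1 (Matrix.of fun _ b => v b) (Matrix.of fun a _ => v a) M

/-- An H-feasible pair for `G`. -/
def HFeasible {V : Type*} [Fintype V] [DecidableEq V] (G : SimpleGraph V)
    (v : V → ℝ) (M : Matrix V V ℝ) : Prop :=
  H2Feasible G M ∧ (blockN v M).PosSemidef

/-- `G` is vertex-transitive. -/
def VertexTransitive {V : Type*} (G : SimpleGraph V) : Prop :=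
  ∀ u w : V, ∃ g : G ≃g G, g u = w

/-!
By the Schur complement, `(v, M)` is H-feasible iff `M` is H²-feasible and `M ⪰ v vᵀ`. Then
`diag(v) M diag(v) / |v|²` is theta-feasible with entry sum `vᵀ M v / |v|² ≥ |v|²`, so
`|v|² ≤ ϑ(G)`, and Cauchy–Schwarz bounds `∑ J v` below by `-√ϑ(G)`.

Conversely, averaging a theta-feasible `C` over `Aut G` keeps it theta-feasible with the same
entry sum `σ`; for vertex-transitive `G` the average has diagonal `1/n` and row sums `σ/n`.
Since `𝟙` is then an eigenvector of `C`, `C ⪰ (σ/n²) 𝟙𝟙ᵀ`, so `J = 𝟙/√n`, `v = -√(σ/n) 𝟙`,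
`M = n C` is feasible with `∑ J v = -√σ`. So the infimum is at most `-√σ` for every
theta-feasible entry sum `σ`, hence at most `-√ϑ(G)`.
-/

open Matrix

namespace Matrix

variable {n : Type*} [Fintype n]

omit [Fintype n] in
theorem PosSemidef.isSymm {M : Matrix n n ℝ} (hM : M.PosSemidef) : M.IsSymm :=
  isHermitian_iff_isSymm.mp hM.isHermitian

theorem PosSemidef.apply_add_apply_le [DecidableEq n] {M : Matrix n n ℝ} (hM : M.PosSemidef)
    (a b : n) : M a b + M b a ≤ M a a + M b b := by
  have := hM.dotProduct_mulVec_nonneg (Pi.single a 1 - Pi.single b 1)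
  simp only [star_trivial, mulVec_sub, mulVec_single_one, sub_dotProduct, dotProduct_sub,
    single_dotProduct, one_mul, col_apply] at this
  linarith

theorem PosSemidef.sum_apply_le_card_mul_trace [DecidableEq n] {M : Matrix n n ℝ}
    (hM : M.PosSemidef) : ∑ a, ∑ b, M a b ≤ Fintype.card n * M.trace := by
  have hswap : ∑ a, ∑ b, M b a = ∑ a, ∑ b, M a b := Finset.sum_comm
  have hdiag : ∑ a, ∑ b, (M a a + M b b) = 2 * (Fintype.card n * M.trace) := by
    simp only [Finset.sum_add_distrib, Finset.sum_const, Finset.card_univ, nsmul_eq_mul,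
      ← Finset.mul_sum, trace, diag]
    ring
  have : 2 * ∑ a, ∑ b, M a b ≤ 2 * (Fintype.card n * M.trace) :=
    calc 2 * ∑ a, ∑ b, M a b = ∑ a, ∑ b, (M a b + M b a) := by
          simp only [Finset.sum_add_distrib, hswap]; ring
      _ ≤ ∑ a, ∑ b, (M a a + M b b) := Finset.sum_le_sum fun a _ =>
          Finset.sum_le_sum fun b _ => hM.apply_add_apply_le a b
      _ = 2 * (Fintype.card n * M.trace) := hdiag
  linarith

theorem PosSemidef.sum_apply_nonneg {M : Matrix n n ℝ} (hM : M.PosSemidef) :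
    0 ≤ ∑ a, ∑ b, M a b := by
  simpa [dotProduct, mulVec] using hM.dotProduct_mulVec_nonneg 1

theorem PosSemidef.sub_smul_vecMulVec_of_mulVec_eq {M : Matrix n n ℝ} (hM : M.PosSemidef)
    {u : n → ℝ} {c : ℝ} (hu : M *ᵥ u = c • u) :
    (M - (c / (u ⬝ᵥ u)) • vecMulVec u u).PosSemidef := by
  refine .of_dotProduct_mulVec_nonneg (hM.isHermitian.sub ?_) fun x => ?_
  · exact (isHermitian_iff_isSymm.mpr (by simp [IsSymm, transpose_vecMulVec])).smul
      (IsSelfAdjoint.all _)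
  have key := hM.dotProduct_mulVec_nonneg (x - ((u ⬝ᵥ x) / (u ⬝ᵥ u)) • u)
  have hux : u ⬝ᵥ M *ᵥ x = c * (u ⬝ᵥ x) := by
    rw [dotProduct_mulVec, ← mulVec_transpose, hM.isSymm.eq, hu, smul_dotProduct, smul_eq_mul]
  simp only [star_trivial, sub_mulVec, mulVec_sub, mulVec_smul, smul_mulVec, dotProduct_sub,
    sub_dotProduct, dotProduct_smul, smul_dotProduct, smul_eq_mul, hu, hux,
    vecMulVec_mulVec, op_smul_eq_mul, dotProduct_comm x u] at key ⊢
  rcases eq_or_ne (u ⬝ᵥ u) 0 with huu | huu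
  · simpa [huu] using key
  · convert key using 1
    field_simp
    ring

end Matrix

theorem blockN_posSemidef_iff {V : Type*} [Fintype V] [DecidableEq V] (v : V → ℝ)
    (M : Matrix V V ℝ) : (blockN v M).PosSemidef ↔ (M - vecMulVec v v).PosSemidef := by
  let _ : Invertible (1 : Matrix Unit Unit ℝ) := invertibleOne
  have h := PosDef.fromBlocks₁₁ (replicateRow Unit v) M (PosDef.one (n := Unit) (R := ℝ))
  rw [conjTranspose_replicateRow, star_trivial, inv_one, Matrix.mul_one,
    ← vecMulVec_eq] at h
  exact h

section Theta

variable {V : Type*} [Fintype V] {G : SimpleGraph V}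

theorem ThetaFeasible.sum_apply_le_lovaszTheta {M : Matrix V V ℝ} (hM : ThetaFeasible G M) :
    ∑ a, ∑ b, M a b ≤ lovaszTheta G := by
  classical
  refine le_csSup ⟨Fintype.card V, ?_⟩ ⟨M, hM, rfl⟩
  rintro _ ⟨M', ⟨-, hpsd, htr, -⟩, rfl⟩
  simpa [htr] using hpsd.sum_apply_le_card_mul_trace

theorem lovaszTheta_nonneg : 0 ≤ lovaszTheta G :=
  Real.sSup_nonneg <| by
    rintro _ ⟨M, hM, rfl⟩
    exact hM.2.1.sum_apply_nonneg

theorem thetaFeasible_inv_card_smul_one [DecidableEq V] [Nonempty V] :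
    ThetaFeasible G ((Fintype.card V : ℝ)⁻¹ • 1) := by
  refine ⟨isSymm_one.smul _, PosSemidef.one.smul (by positivity), ?_, fun a b hab => ?_⟩
  · simp [trace_smul, trace_one]
  · simp [one_apply_ne (G.ne_of_adj hab)]

theorem lovaszTheta_le [Nonempty V] {c : ℝ}
    (h : ∀ M, ThetaFeasible G M → ∑ a, ∑ b, M a b ≤ c) : lovaszTheta G ≤ c := by
  classical
  refine csSup_le ⟨_, _, thetaFeasible_inv_card_smul_one, rfl⟩ ?_
  rintro _ ⟨M, hM, rfl⟩
  exact h M hM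

variable [DecidableEq V]

theorem H2Feasible.thetaFeasible_inv_smul_diagonal_mul_mul_diagonal {M : Matrix V V ℝ}
    (hM : H2Feasible G M) {v : V → ℝ} (hv : v ⬝ᵥ v ≠ 0) :
    ThetaFeasible G ((v ⬝ᵥ v)⁻¹ • (diagonal v * M * diagonal v)) := by
  obtain ⟨-, hpsd, hdiag, hedge⟩ := hM
  have hv0 : 0 ≤ (v ⬝ᵥ v)⁻¹ := inv_nonneg.mpr (by simpa using dotProduct_star_self_nonneg v)
  have hpsd' : (diagonal v * M * diagonal v).PosSemidef := by
    simpa using hpsd.mul_mul_conjTranspose_same (diagonal v)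
  refine ⟨(hpsd'.smul hv0).isSymm, hpsd'.smul hv0, ?_, fun a b hab => ?_⟩
  · have : (diagonal v * M * diagonal v).trace = v ⬝ᵥ v := by
      simp [trace, diagonal_mul, mul_diagonal, hdiag, dotProduct]
    rw [trace_smul, this, smul_eq_mul, inv_mul_cancel₀ hv]
  · simp [diagonal_mul, mul_diagonal, hedge a b hab]

theorem HFeasible.dotProduct_self_le_lovaszTheta {v : V → ℝ}
    {M : Matrix V V ℝ} (h : HFeasible G v M) : v ⬝ᵥ v ≤ lovaszTheta G := by
  rcases (by simpa using dotProduct_star_self_nonneg v : 0 ≤ v ⬝ᵥ v).eq_or_lt with hv | hv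
  · exact hv ▸ lovaszTheta_nonneg
  have hquad : (v ⬝ᵥ v) ^ 2 ≤ v ⬝ᵥ M *ᵥ v := by
    have := ((blockN_posSemidef_iff v M).1 h.2).dotProduct_mulVec_nonneg v
    simp only [star_trivial, sub_mulVec, dotProduct_sub, vecMulVec_mulVec, op_smul_eq_mul,
      dotProduct_smul] at this
    nlinarith
  have hsum : ∑ a, ∑ b, ((v ⬝ᵥ v)⁻¹ • (diagonal v * M * diagonal v)) a b
      = (v ⬝ᵥ v)⁻¹ * (v ⬝ᵥ M *ᵥ v) := by
    simp [diagonal_mul, mul_diagonal, dotProduct, mulVec, Finset.mul_sum, mul_assoc,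
      mul_left_comm]
  calc v ⬝ᵥ v ≤ (v ⬝ᵥ v)⁻¹ * (v ⬝ᵥ M *ᵥ v) := by
        rw [le_inv_mul_iff₀ hv]; nlinarith
    _ ≤ lovaszTheta G := hsum ▸
        (h.1.thetaFeasible_inv_smul_diagonal_mul_mul_diagonal hv.ne').sum_apply_le_lovaszTheta

def hObjectiveValues (G : SimpleGraph V) : Set ℝ :=
  {x : ℝ | ∃ (J v : V → ℝ) (M : Matrix V V ℝ),
    (∑ a, J a ^ 2) = 1 ∧ HFeasible G v M ∧ x = ∑ a, J a * v a}

theorem neg_sqrt_lovaszTheta_le_of_mem_hObjectiveValues {x : ℝ}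
    (hx : x ∈ hObjectiveValues G) : -√(lovaszTheta G) ≤ x := by
  obtain ⟨J, v, M, hJ, hH, rfl⟩ := hx
  have hcs := Finset.sum_mul_sq_le_sq_mul_sq Finset.univ J v
  have hv : ∑ a, v a ^ 2 ≤ lovaszTheta G := by
    simpa only [dotProduct, ← sq] using hH.dotProduct_self_le_lovaszTheta
  rw [hJ, one_mul] at hcs
  linarith [neg_abs_le (∑ a, J a * v a), Real.abs_le_sqrt (hcs.trans hv)]

end Theta

instance SimpleGraph.finite_iso_self {V : Type*} [Finite V] (G : SimpleGraph V) :
    Finite (G ≃g G) :=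
  Finite.of_injective _ DFunLike.coe_injective

section Average

variable {V : Type*} (G : SimpleGraph V) [Fintype (G ≃g G)]

noncomputable def autAverage (M : Matrix V V ℝ) : Matrix V V ℝ :=
  (Fintype.card (G ≃g G) : ℝ)⁻¹ • ∑ g : G ≃g G, M.submatrix g g

variable {G}

theorem autAverage_apply (M : Matrix V V ℝ) (a b : V) :
    autAverage G M a b = (Fintype.card (G ≃g G) : ℝ)⁻¹ * ∑ g : G ≃g G, M (g a) (g b) := by
  simp [autAverage, Matrix.sum_apply]

theorem autAverage_apply_iso (M : Matrix V V ℝ) (h : G ≃g G) (a b : V) :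
    autAverage G M (h a) (h b) = autAverage G M a b := by
  simp only [autAverage_apply]
  congr 1
  exact Fintype.sum_equiv (Equiv.mulRight h) _ _ fun _ => rfl

variable [Fintype V]

theorem sum_autAverage_apply (M : Matrix V V ℝ) :
    ∑ a, ∑ b, autAverage G M a b = ∑ a, ∑ b, M a b := by
  have hiso : ∀ g : G ≃g G, ∑ a, ∑ b, M (g a) (g b) = ∑ a, ∑ b, M a b := fun g =>
    Fintype.sum_equiv g.toEquiv _ _ fun a => Fintype.sum_equiv g.toEquiv _ _ fun _ => rfl
  simp only [autAverage_apply, ← Finset.mul_sum]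
  rw [Finset.sum_congr rfl fun a _ => Finset.sum_comm, Finset.sum_comm]
  simp [hiso]

theorem ThetaFeasible.autAverage {M : Matrix V V ℝ} (hM : ThetaFeasible G M) :
    ThetaFeasible G (autAverage G M) := by
  obtain ⟨-, hpsd, htr, hedge⟩ := hM
  have hpsd' : (_root_.autAverage G M).PosSemidef :=
    (posSemidef_sum Finset.univ fun (g : G ≃g G) _ => hpsd.submatrix g).smul
      (by positivity : (0 : ℝ) ≤ (Fintype.card (G ≃g G) : ℝ)⁻¹)
  refine ⟨hpsd'.isSymm, hpsd', ?_, fun a b hab => ?_⟩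
  · have : ∀ g : G ≃g G, (M.submatrix g g).trace = 1 := fun g =>
      htr ▸ Fintype.sum_equiv g.toEquiv _ _ fun _ => rfl
    simp [_root_.autAverage, trace_sum, this]
  · rw [autAverage_apply, Finset.sum_eq_zero fun g _ => hedge _ _ (g.map_adj_iff.mpr hab),
      mul_zero]

end Average

theorem VertexTransitive.apply_eq_apply_of_invariant {V α : Type*} {G : SimpleGraph V}
    (hG : VertexTransitive G) {f : V → α} (hf : ∀ (g : G ≃g G) a, f (g a) = f a) (a b : V) :
    f a = f b := by
  obtain ⟨g, rfl⟩ := hG a b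
  exact (hf g a).symm

section VertexTransitive

variable {V : Type*} [Fintype V] {G : SimpleGraph V}

theorem VertexTransitive.apply_self_eq_inv_card (hG : VertexTransitive G) {C : Matrix V V ℝ}
    (hC : ∀ (g : G ≃g G) a b, C (g a) (g b) = C a b) (htr : C.trace = 1) (a : V) :
    C a a = (Fintype.card V : ℝ)⁻¹ := by
  have hconst : ∀ b, C b b = C a a := fun b =>
    hG.apply_eq_apply_of_invariant (f := fun b => C b b) (fun g b => hC g b b) b a
  refine eq_inv_of_mul_eq_one_right ?_
  simpa [trace, hconst] using htr

theorem VertexTransitive.mulVec_one_eq_smul_one (hG : VertexTransitive G) {C : Matrix V V ℝ}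
    (hC : ∀ (g : G ≃g G) a b, C (g a) (g b) = C a b) (a : V) :
    C *ᵥ 1 = (C *ᵥ 1) a • 1 := by
  have hrow : ∀ (g : G ≃g G) b, (C *ᵥ 1) (g b) = (C *ᵥ 1) b := fun g b => by
    simpa [mulVec, dotProduct] using
      (Fintype.sum_equiv g.toEquiv _ _ fun c => (hC g b c).symm).symm
  ext b
  simpa using hG.apply_eq_apply_of_invariant hrow b a

variable [DecidableEq V]

theorem ThetaFeasible.neg_sqrt_sum_apply_mem_hObjectiveValues [Nonempty V] {C : Matrix V V ℝ}
    (hC : ThetaFeasible G C) (hdiag : ∀ a, C a a = (Fintype.card V : ℝ)⁻¹) {r : ℝ}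
    (hrow : C *ᵥ 1 = r • 1) : -√(∑ a, ∑ b, C a b) ∈ hObjectiveValues G := by
  obtain ⟨hsym, hpsd, -, hedge⟩ := hC
  set n : ℝ := (Fintype.card V : ℝ)
  have hn : 0 < n := Nat.cast_pos.mpr Fintype.card_pos
  have hsum : ∑ a, ∑ b, C a b = n * r := by
    simpa [mulVec, dotProduct, n] using congrArg (fun w => ∑ a, w a) hrow
  have hr : 0 ≤ r := (mul_nonneg_iff_of_pos_left hn).1 (hsum ▸ hpsd.sum_apply_nonneg)
  refine ⟨fun _ => (√n)⁻¹, fun _ => -√r, n • C, ?_,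
    ⟨⟨hsym.smul n, hpsd.smul hn.le, fun a => ?_, fun a b hab => ?_⟩, ?_⟩, ?_⟩
  · simp [inv_pow, Real.sq_sqrt hn.le, n, hn.ne']
  · simp [hdiag a, n, hn.ne']
  · simp [hedge a b hab]
  · have h1 : (1 : V → ℝ) ⬝ᵥ 1 = n := by simp [n]
    have h := (hpsd.sub_smul_vecMulVec_of_mulVec_eq hrow).smul hn.le
    rw [h1, smul_sub, smul_smul, mul_div_cancel₀ r hn.ne'] at h
    rw [blockN_posSemidef_iff]
    convert h using 2
    ext a b
    simp [vecMulVec, Real.mul_self_sqrt hr]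
  · calc -√(∑ a, ∑ b, C a b) = -(√n * √r) := by rw [hsum, Real.sqrt_mul hn.le]
      _ = n * ((√n)⁻¹ * -√r) := by field_simp; rw [Real.sq_sqrt hn.le]; ring
      _ = ∑ _a : V, (√n)⁻¹ * -√r := by simp [n]

theorem VertexTransitive.neg_sqrt_sum_apply_mem_hObjectiveValues [Nonempty V]
    [Fintype (G ≃g G)] (hG : VertexTransitive G) {M : Matrix V V ℝ} (hM : ThetaFeasible G M) :
    -√(∑ a, ∑ b, M a b) ∈ hObjectiveValues G := by
  have hC := hM.autAverage
  have hinv := autAverage_apply_iso (G := G) M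
  rw [← sum_autAverage_apply (G := G)]
  exact hC.neg_sqrt_sum_apply_mem_hObjectiveValues (hG.apply_self_eq_inv_card hinv hC.2.2.1)
    (hG.mulVec_one_eq_smul_one hinv (Classical.arbitrary V))

end VertexTransitive

theorem stmt0 {V : Type*} [Fintype V] [DecidableEq V] [Nonempty V]
    (G : SimpleGraph V) (hG : VertexTransitive G) :
    sInf {x : ℝ | ∃ (J v : V → ℝ) (M : Matrix V V ℝ),
        (∑ a, J a ^ 2) = 1 ∧ HFeasible G v M ∧ x = ∑ a, J a * v a}
      = - Real.sqrt (lovaszTheta G) := by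
  have := Fintype.ofFinite (G ≃g G)
  change sInf (hObjectiveValues G) = _
  have hlow : ∀ x ∈ hObjectiveValues G, -√(lovaszTheta G) ≤ x := fun _ hx =>
    neg_sqrt_lovaszTheta_le_of_mem_hObjectiveValues hx
  have hmem {M : Matrix V V ℝ} (hM : ThetaFeasible G M) :=
    hG.neg_sqrt_sum_apply_mem_hObjectiveValues hM
  have hle {M : Matrix V V ℝ} (hM : ThetaFeasible G M) :
      sInf (hObjectiveValues G) ≤ -√(∑ a, ∑ b, M a b) :=
    csInf_le ⟨_, hlow⟩ (hmem hM)
  have hM₀ := thetaFeasible_inv_card_smul_one (G := G)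
  have hnonneg : 0 ≤ -sInf (hObjectiveValues G) :=
    neg_nonneg.2 ((hle hM₀).trans (neg_nonpos.2 (Real.sqrt_nonneg _)))
  have hθ : √(lovaszTheta G) ≤ -sInf (hObjectiveValues G) :=
    (Real.sqrt_le_left hnonneg).2 <| lovaszTheta_le fun M hM =>
      (Real.sqrt_le_left hnonneg).1 (by linarith [hle hM])
  exact le_antisymm (by linarith) (le_csInf ⟨_, hmem hM₀⟩ hlow)
end

section
/- Let G be a finite simple graph on a nonempty vertex set V. Then the supremum, over all real vectors J ∈ ℝ^V with Σ_α J_α² = 1 and all H²-feasible matrices M for G, of the quadratic form Σ_{α,β} M_{αβ} J_α J_β, is equal to ϑ(G). That is, the worst case of the graph semi-definite program for H² equals the Lovász theta function of G. -/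
open scoped BigOperators

/-!
Conjugating by the diagonal matrix `diag J` turns an H²-feasible `M` and a unit vector `J` into a
theta-feasible matrix with entry sum `∑ M a b J a J b`. Conversely a theta-feasible `M'` is
`diag J · M · diag J` with `J a = √(M' a a)` and `M` the rescaling of `M'` to unit diagonal; this
works because a row of a positive semidefinite matrix with zero diagonal entry vanishes. So the
two suprema are taken over the same set of values.
-/

open Matrix
open scoped ComplexOrder

namespace Matrix.PosSemidef

variable {n 𝕜 : Type*} [Fintype n] [RCLike 𝕜] {A : Matrix n n 𝕜}

theorem apply_eq_zero_of_diag_eq_zero_right (hA : A.PosSemidef) {i : n} (hi : A i i = 0)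
    (j : n) : A j i = 0 := by
  classical
  have hzero : star (Pi.single i 1) ⬝ᵥ A *ᵥ Pi.single i 1 = 0 := by
    simpa [mulVec_single, dotProduct, Pi.single_apply] using hi
  simpa [mulVec_single] using congrFun ((hA.dotProduct_mulVec_zero_iff _).mp hzero) j

theorem apply_eq_zero_of_diag_eq_zero_left (hA : A.PosSemidef) {i : n} (hi : A i i = 0)
    (j : n) : A i j = 0 := by
  rw [← hA.isHermitian.apply i j, hA.apply_eq_zero_of_diag_eq_zero_right hi, star_zero]

end Matrix.PosSemidef

section

variable {n R : Type*} [Fintype n] [DecidableEq n]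

theorem Matrix.diagonal_mul_mul_diagonal_apply [NonUnitalNonAssocSemiring R] (d : n → R)
    (M : Matrix n n R) (a b : n) :
    (diagonal d * M * diagonal d) a b = d a * M a b * d b := by
  rw [mul_diagonal, diagonal_mul]

theorem Matrix.PosSemidef.diagonal_mul_mul_diagonal [CommRing R] [PartialOrder R] [StarRing R]
    [TrivialStar R] {M : Matrix n n R} (hM : M.PosSemidef) (d : n → R) :
    (diagonal d * M * diagonal d).PosSemidef := by
  simpa [diagonal_conjTranspose] using hM.mul_mul_conjTranspose_same (diagonal d)

end

section Rescaling

variable {V : Type*} [Fintype V]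

noncomputable def diagSqrt (M : Matrix V V ℝ) : V → ℝ := fun a => √(M a a)

theorem sum_diagSqrt_sq {M : Matrix V V ℝ} (hM : M.PosSemidef) :
    ∑ a, diagSqrt M a ^ 2 = M.trace :=
  Finset.sum_congr rfl fun _ _ => Real.sq_sqrt hM.diag_nonneg

variable [DecidableEq V]

theorem sum_sum_diagonal_mul_mul_diagonal (J : V → ℝ) (M : Matrix V V ℝ) :
    ∑ a, ∑ b, (diagonal J * M * diagonal J) a b = ∑ a, ∑ b, M a b * J a * J b := by
  simp only [diagonal_mul_mul_diagonal_apply]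
  exact Finset.sum_congr rfl fun a _ => Finset.sum_congr rfl fun b _ => by ring

theorem H2Feasible.thetaFeasible_diagonal_mul_mul_diagonal {G : SimpleGraph V}
    {M : Matrix V V ℝ} (hM : H2Feasible G M) {J : V → ℝ} (hJ : ∑ a, J a ^ 2 = 1) :
    ThetaFeasible G (diagonal J * M * diagonal J) := by
  obtain ⟨-, hpsd, hdiag, hedge⟩ := hM
  have hpsd' := hpsd.diagonal_mul_mul_diagonal J
  refine ⟨isHermitian_iff_isSymm.mp hpsd'.isHermitian, hpsd', ?_, fun a b hab => ?_⟩
  · simpa only [trace, diag, diagonal_mul_mul_diagonal_apply, hdiag, mul_one, ← sq] using hJ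
  · rw [diagonal_mul_mul_diagonal_apply, hedge a b hab, mul_zero, zero_mul]

/-- Where `M a a = 0` the scaling factor is the junk value `(√0)⁻¹ = 0`; the second summand
then puts a `1` on the diagonal. -/
noncomputable def unitDiagRescale (M : Matrix V V ℝ) : Matrix V V ℝ :=
  diagonal (diagSqrt M)⁻¹ * M * diagonal (diagSqrt M)⁻¹ +
    diagonal fun a => if M a a = 0 then 1 else 0

theorem posSemidef_unitDiagRescale {M : Matrix V V ℝ} (hM : M.PosSemidef) :
    (unitDiagRescale M).PosSemidef := by
  refine (hM.diagonal_mul_mul_diagonal _).add (PosSemidef.diagonal fun a => ?_)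
  dsimp only [Pi.zero_apply]
  split_ifs <;> norm_num

theorem unitDiagRescale_apply_self {M : Matrix V V ℝ} (hM : M.PosSemidef) (a : V) :
    unitDiagRescale M a a = 1 := by
  simp only [unitDiagRescale, Matrix.add_apply, diagonal_mul_mul_diagonal_apply, diagonal_apply_eq,
    Pi.inv_apply, diagSqrt]
  by_cases h : M a a = 0
  · simp [h]
  · have hs : √(M a a) ^ 2 = M a a := Real.sq_sqrt hM.diag_nonneg
    have : √(M a a) ≠ 0 := Real.sqrt_ne_zero'.mpr (hM.diag_nonneg.lt_of_ne' h)
    rw [if_neg h, add_zero]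
    field_simp
    exact hs.symm

theorem unitDiagRescale_apply_of_ne (M : Matrix V V ℝ) {a b : V} (hab : a ≠ b) :
    unitDiagRescale M a b = (diagSqrt M a)⁻¹ * M a b * (diagSqrt M b)⁻¹ := by
  rw [unitDiagRescale, Matrix.add_apply, diagonal_mul_mul_diagonal_apply, diagonal_apply_ne _ hab,
    add_zero, Pi.inv_apply, Pi.inv_apply]

theorem diagonal_diagSqrt_mul_unitDiagRescale_mul {M : Matrix V V ℝ} (hM : M.PosSemidef) :
    diagonal (diagSqrt M) * unitDiagRescale M * diagonal (diagSqrt M) = M := by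
  ext a b
  rw [diagonal_mul_mul_diagonal_apply]
  by_cases ha : M a a = 0
  · simp [diagSqrt, ha, hM.apply_eq_zero_of_diag_eq_zero_left ha]
  by_cases hb : M b b = 0
  · simp [diagSqrt, hb, hM.apply_eq_zero_of_diag_eq_zero_right hb]
  have hsa : diagSqrt M a ≠ 0 := by simpa [diagSqrt, hM.diag_nonneg] using ha
  have hsb : diagSqrt M b ≠ 0 := by simpa [diagSqrt, hM.diag_nonneg] using hb
  by_cases hab : a = b
  · subst hab
    rw [unitDiagRescale_apply_self hM, mul_one, ← sq, diagSqrt, Real.sq_sqrt hM.diag_nonneg]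
  · rw [unitDiagRescale_apply_of_ne M hab]
    field_simp

theorem ThetaFeasible.h2Feasible_unitDiagRescale {G : SimpleGraph V} {M : Matrix V V ℝ}
    (hM : ThetaFeasible G M) : H2Feasible G (unitDiagRescale M) := by
  obtain ⟨-, hpsd, -, hedge⟩ := hM
  have hpsd' := posSemidef_unitDiagRescale hpsd
  refine ⟨isHermitian_iff_isSymm.mp hpsd'.isHermitian, hpsd', unitDiagRescale_apply_self hpsd,
    fun a b hab => ?_⟩
  rw [unitDiagRescale_apply_of_ne M (G.ne_of_adj hab), hedge a b hab, mul_zero, zero_mul]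

end Rescaling

theorem stmt4_general {V : Type*} [Fintype V] (G : SimpleGraph V) :
    sSup {x : ℝ | ∃ (J : V → ℝ) (M : Matrix V V ℝ),
        (∑ a, J a ^ 2) = 1 ∧ H2Feasible G M ∧ x = ∑ a, ∑ b, M a b * J a * J b}
      = lovaszTheta G := by
  classical
  unfold lovaszTheta
  congr 1
  ext x
  constructor
  · rintro ⟨J, M, hJ, hM, rfl⟩
    exact ⟨_, hM.thetaFeasible_diagonal_mul_mul_diagonal hJ,
      (sum_sum_diagonal_mul_mul_diagonal J M).symm⟩
  · rintro ⟨M, hM, rfl⟩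
    refine ⟨diagSqrt M, unitDiagRescale M, ?_, hM.h2Feasible_unitDiagRescale, ?_⟩
    · rw [sum_diagSqrt_sq hM.2.1, hM.2.2.1]
    · rw [← sum_sum_diagonal_mul_mul_diagonal, diagonal_diagSqrt_mul_unitDiagRescale_mul hM.2.1]

theorem stmt4 {V : Type*} [Fintype V] [Nonempty V] (G : SimpleGraph V) :
    sSup {x : ℝ | ∃ (J : V → ℝ) (M : Matrix V V ℝ),
        (∑ a, J a ^ 2) = 1 ∧ H2Feasible G M ∧ x = ∑ a, ∑ b, M a b * J a * J b}
      = lovaszTheta G :=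
  stmt4_general G
end

section
/- Let G be a finite simple graph on a nonempty vertex set V. Then there exist d ≥ 1, Hermitian d×d complex matrices (O_α)_{α∈V} with O_α² = I for all α, satisfying O_α O_β = −O_β O_α whenever αβ is an edge of G and O_α O_β = O_β O_α whenever α ≠ β are not adjacent in G, and a real vector J ∈ ℝ^V with Σ_α J_α² = 1, such that ‖Σ_α J_α O_α‖² ≥ α(G), where α(G) is the independence number of G. (In particular the graph invariant Ψ(G) is bounded below by α(G).) -/
open scoped BigOperators

/-- The independence number of `G`: the largest cardinality of a set of vertices no two of
which are adjacent. -/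
noncomputable def indepNum {V : Type*} [Fintype V] (G : SimpleGraph V) : ℕ :=
  sSup {k : ℕ | ∃ s : Finset V, (∀ a ∈ s, ∀ b ∈ s, ¬ G.Adj a b) ∧ s.card = k}

/-- The operator norm of a complex matrix acting on ℂ^d with the standard Hermitian
inner product. -/
noncomputable def matOpNorm {m : Type*} [Fintype m] [DecidableEq m] (M : Matrix m m ℂ) : ℝ :=
  ‖Matrix.toEuclideanCLM (𝕜 := ℂ) M‖

/-!
Put a qubit on every vertex and order the vertices. The observable of a vertex `a` is `X` on
the qubit of `a` tensored with `Z` on the qubit of every neighbour preceding `a`. Two such Pauli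
strings anticommute iff they meet as `X` against `Z` on an odd number of qubits: for an edge this
happens exactly once (at its smaller endpoint), for a non-edge never.

If `S` is a maximum independent set, the product state with `|+⟩` on `S` and `|0⟩` off `S` is fixed by
every observable of a vertex of `S`, because the `Z` factors sit on neighbours, which lie off `S`.
With `J` the normalized indicator of `S`, the state is an eigenvector of `∑ J a • O a` with
eigenvalue `#S / √#S = √#S`, so the squared norm is at least `#S = α(G)`.
-/

open Matrix

namespace Matrix

variable {ι R l m n : Type*} [Fintype ι] [CommRing R]

def piKron (P : ι → Matrix m n R) : Matrix (ι → m) (ι → n) R :=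
  of fun s t => ∏ i, P i (s i) (t i)

theorem piKron_apply (P : ι → Matrix m n R) (s : ι → m) (t : ι → n) :
    piKron P s t = ∏ i, P i (s i) (t i) := rfl

theorem piKron_mul [Fintype m] [DecidableEq ι] (P : ι → Matrix l m R)
    (Q : ι → Matrix m n R) : piKron P * piKron Q = piKron fun i => P i * Q i := by
  ext s t
  simp only [mul_apply, piKron_apply, Fintype.prod_sum, Finset.prod_mul_distrib]

theorem piKron_one [DecidableEq m] : piKron (fun _ : ι => (1 : Matrix m m R)) = 1 := by
  ext s t
  simp only [piKron_apply, one_apply, Fintype.prod_boole, funext_iff]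

theorem piKron_conjTranspose [StarRing R] (P : ι → Matrix m n R) :
    (piKron P)ᴴ = piKron fun i => (P i)ᴴ := by
  ext s t
  simp [piKron_apply, conjTranspose_apply]

theorem commute_piKron [Fintype m] [DecidableEq ι] {P Q : ι → Matrix m m R}
    (h : ∀ i, Commute (P i) (Q i)) : Commute (piKron P) (piKron Q) := by
  rw [Commute, SemiconjBy, piKron_mul, piKron_mul]
  simp_rw [(h _).eq]

theorem piKron_eq_neg_of_eq_neg_at [DecidableEq ι] {P Q : ι → Matrix m n R} (i₀ : ι)
    (h₀ : P i₀ = -Q i₀) (h : ∀ i ≠ i₀, P i = Q i) : piKron P = -piKron Q := by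
  ext s t
  simp only [piKron_apply, neg_apply, ← Finset.mul_prod_erase _ _ (Finset.mem_univ i₀), h₀]
  rw [Finset.prod_congr rfl fun i hi => by rw [h i (Finset.ne_of_mem_erase hi)]]
  simp

theorem piKron_mul_eq_neg_of_anticommute_at [Fintype m] [DecidableEq ι]
    {P Q : ι → Matrix m m R} (i₀ : ι) (h₀ : P i₀ * Q i₀ = -(Q i₀ * P i₀))
    (h : ∀ i ≠ i₀, Commute (P i) (Q i)) :
    piKron P * piKron Q = -(piKron Q * piKron P) := by
  rw [piKron_mul, piKron_mul]
  exact piKron_eq_neg_of_eq_neg_at i₀ h₀ fun i hi => (h i hi).eq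

def piKronVec (v : ι → n → R) : (ι → n) → R := fun t => ∏ i, v i (t i)

theorem piKron_mulVec_piKronVec [Fintype n] [DecidableEq ι] (P : ι → Matrix m n R)
    (v : ι → n → R) : piKron P *ᵥ piKronVec v = piKronVec fun i => P i *ᵥ v i := by
  ext s
  simp only [mulVec, dotProduct, piKron_apply, piKronVec, Fintype.prod_sum,
    Finset.prod_mul_distrib]

end Matrix

section Pauli

variable {R : Type*} [CommRing R]

def pauliX : Matrix (Fin 2) (Fin 2) R := !![0, 1; 1, 0]

def pauliZ : Matrix (Fin 2) (Fin 2) R := !![1, 0; 0, -1]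

theorem pauliX_mul_self : (pauliX : Matrix (Fin 2) (Fin 2) R) * pauliX = 1 := by
  simp [pauliX, one_fin_two]

theorem pauliZ_mul_self : (pauliZ : Matrix (Fin 2) (Fin 2) R) * pauliZ = 1 := by
  simp [pauliZ, one_fin_two]

theorem pauliX_mul_pauliZ :
    (pauliX : Matrix (Fin 2) (Fin 2) R) * pauliZ = -(pauliZ * pauliX) := by
  simp [pauliX, pauliZ]

theorem pauliX_isHermitian [StarRing R] : (pauliX : Matrix (Fin 2) (Fin 2) R).IsHermitian := by
  ext i j; fin_cases i <;> fin_cases j <;> simp [pauliX]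

theorem pauliZ_isHermitian [StarRing R] : (pauliZ : Matrix (Fin 2) (Fin 2) R).IsHermitian := by
  ext i j; fin_cases i <;> fin_cases j <;> simp [pauliZ]

theorem pauliX_mulVec : (pauliX : Matrix (Fin 2) (Fin 2) R) *ᵥ ![1, 1] = ![1, 1] := by
  ext i; fin_cases i <;> simp [pauliX]

theorem pauliZ_mulVec : (pauliZ : Matrix (Fin 2) (Fin 2) R) *ᵥ ![1, 0] = ![1, 0] := by
  ext i; fin_cases i <;> simp [pauliZ]

end Pauli

section GraphPauli

variable (R : Type*) [CommRing R] {V : Type*} [LinearOrder V] (G : SimpleGraph V)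
  [DecidableRel G.Adj]

def graphPauliFactor (a c : V) : Matrix (Fin 2) (Fin 2) R :=
  if c = a then pauliX else if G.Adj a c ∧ c < a then pauliZ else 1

def graphPauli [Fintype V] (a : V) : Matrix (V → Fin 2) (V → Fin 2) R :=
  piKron (graphPauliFactor R G a)

variable {R G}

theorem graphPauliFactor_self (a : V) : graphPauliFactor R G a a = pauliX := by
  simp [graphPauliFactor]

theorem graphPauliFactor_of_ne {a c : V} (h : c ≠ a) :
    graphPauliFactor R G a c = if G.Adj a c ∧ c < a then pauliZ else 1 := by
  simp [graphPauliFactor, h]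

theorem commute_graphPauliFactor_of_ne_of_ne {a b c : V} (ha : c ≠ a) (hb : c ≠ b) :
    Commute (graphPauliFactor R G a c) (graphPauliFactor R G b c) := by
  rw [graphPauliFactor_of_ne ha, graphPauliFactor_of_ne hb]
  split_ifs <;> simp

theorem commute_graphPauliFactor_at_left {a b : V} (hab : a ≠ b) (h : ¬ (G.Adj a b ∧ a < b)) :
    Commute (graphPauliFactor R G a a) (graphPauliFactor R G b a) := by
  rw [graphPauliFactor_of_ne hab, if_neg (by rwa [G.adj_comm])]
  exact Commute.one_right _

variable [Fintype V]

theorem graphPauli_isHermitian [StarRing R] (a : V) : (graphPauli R G a).IsHermitian := by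
  rw [IsHermitian, graphPauli, piKron_conjTranspose]
  congr 1
  ext1 c
  unfold graphPauliFactor
  split_ifs
  exacts [pauliX_isHermitian, pauliZ_isHermitian, conjTranspose_one]

theorem graphPauli_mul_self (a : V) : graphPauli R G a * graphPauli R G a = 1 := by
  rw [graphPauli, piKron_mul, ← piKron_one]
  congr 1
  ext1 c
  unfold graphPauliFactor
  split_ifs
  exacts [pauliX_mul_self, pauliZ_mul_self, mul_one 1]

theorem commute_graphPauli {a b : V} (hab : a ≠ b) (h : ¬ G.Adj a b) :
    Commute (graphPauli R G a) (graphPauli R G b) := by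
  refine commute_piKron fun c => ?_
  by_cases ha : c = a
  · subst ha
    exact commute_graphPauliFactor_at_left hab fun h' => h h'.1
  by_cases hb : c = b
  · subst hb
    exact (commute_graphPauliFactor_at_left (Ne.symm hab) fun h' => h h'.1.symm).symm
  exact commute_graphPauliFactor_of_ne_of_ne ha hb

theorem graphPauli_mul_eq_neg_of_lt {a b : V} (h : G.Adj a b) (hlt : a < b) :
    graphPauli R G a * graphPauli R G b = -(graphPauli R G b * graphPauli R G a) := by
  refine piKron_mul_eq_neg_of_anticommute_at a ?_ fun c ha => ?_
  · rw [graphPauliFactor_self, graphPauliFactor_of_ne hlt.ne, if_pos ⟨h.symm, hlt⟩]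
    exact pauliX_mul_pauliZ
  by_cases hb : c = b
  · subst hb
    exact (commute_graphPauliFactor_at_left hlt.ne' fun h' => lt_asymm hlt h'.2).symm
  exact commute_graphPauliFactor_of_ne_of_ne ha hb

theorem graphPauli_anticommute {a b : V} (h : G.Adj a b) :
    graphPauli R G a * graphPauli R G b = -(graphPauli R G b * graphPauli R G a) := by
  rcases (G.ne_of_adj h).lt_or_gt with hlt | hlt
  · exact graphPauli_mul_eq_neg_of_lt h hlt
  · rw [graphPauli_mul_eq_neg_of_lt h.symm hlt, neg_neg]

end GraphPauli

section IndepSetState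

variable (R : Type*) [CommRing R] {V : Type*} [Fintype V] [DecidableEq V]

def indepSetState (S : Finset V) : (V → Fin 2) → R :=
  piKronVec fun c => if c ∈ S then ![1, 1] else ![1, 0]

theorem indepSetState_ne_zero [Nontrivial R] (S : Finset V) : indepSetState R S ≠ 0 := by
  refine Function.ne_iff.2 ⟨fun _ => 0, ?_⟩
  simp only [indepSetState, piKronVec, Pi.zero_apply]
  rw [Finset.prod_eq_one fun c _ => by split_ifs <;> rfl]
  exact one_ne_zero

variable {R} [LinearOrder V] {G : SimpleGraph V} [DecidableRel G.Adj]

theorem graphPauli_mulVec_indepSetState {S : Finset V} (hS : G.IsIndepSet S) {a : V}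
    (ha : a ∈ S) : graphPauli R G a *ᵥ indepSetState R S = indepSetState R S := by
  rw [graphPauli, indepSetState, piKron_mulVec_piKronVec]
  congr 1
  ext1 c
  by_cases hca : c = a
  · subst hca
    rw [graphPauliFactor_self, if_pos ha, pauliX_mulVec]
  rw [graphPauliFactor_of_ne hca]
  split_ifs with hZ hc
  · exact absurd hZ.1 (hS ha hc (Ne.symm hca))
  · exact pauliZ_mulVec
  · exact one_mulVec _
  · exact one_mulVec _

end IndepSetState

theorem Matrix.sum_smul_mulVec_of_mulVec_eq_self {R ι m : Type*} [CommRing R] [Fintype ι]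
    [Fintype m] {O : ι → Matrix m m R} {v : m → R} {S : Finset ι} (J : ι → R)
    (hJ : ∀ a ∉ S, J a = 0) (hO : ∀ a ∈ S, O a *ᵥ v = v) :
    (∑ a, J a • O a) *ᵥ v = (∑ a ∈ S, J a) • v := by
  rw [sum_mulVec, Finset.sum_smul, ← Finset.sum_subset (Finset.subset_univ S)]
  · exact Finset.sum_congr rfl fun a ha => by rw [smul_mulVec, hO a ha]
  · intro a _ ha
    rw [hJ a ha, zero_smul, zero_mulVec]

section NormalizedIndicator

variable {V : Type*} [DecidableEq V]

noncomputable def normalizedIndicator (S : Finset V) (a : V) : ℝ :=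
  if a ∈ S then (√S.card)⁻¹ else 0

theorem sum_normalizedIndicator_sq [Fintype V] {S : Finset V} (hS : S.Nonempty) :
    ∑ a, normalizedIndicator S a ^ 2 = 1 := by
  have hpos : (0 : ℝ) < S.card := by exact_mod_cast hS.card_pos
  simp [normalizedIndicator, Finset.sum_ite_mem, Real.sq_sqrt hpos.le, hpos.ne']

theorem sum_normalizedIndicator (S : Finset V) :
    ∑ a ∈ S, normalizedIndicator S a = √S.card := by
  simp [normalizedIndicator, ← div_eq_mul_inv, Real.div_sqrt]

end NormalizedIndicator

theorem norm_le_matOpNorm_of_mulVec_eq_smul {m : Type*} [Fintype m] [DecidableEq m]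
    {M : Matrix m m ℂ} {v : m → ℂ} {c : ℂ} (hv : v ≠ 0) (h : M *ᵥ v = c • v) :
    ‖c‖ ≤ matOpNorm M := by
  have := (toEuclideanCLM (𝕜 := ℂ) M).le_opNorm (WithLp.toLp 2 v)
  rw [toEuclideanCLM_toLp, h, WithLp.toLp_smul, norm_smul] at this
  exact le_of_mul_le_mul_right this (norm_pos_iff.2 (by simpa using hv))

theorem norm_le_matOpNorm_reindex_of_mulVec_eq_smul {m n : Type*} [Fintype m] [Fintype n]
    [DecidableEq n] (e : m ≃ n) {M : Matrix m m ℂ} {v : m → ℂ} {c : ℂ} (hv : v ≠ 0)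
    (h : M *ᵥ v = c • v) : ‖c‖ ≤ matOpNorm (reindex e e M) := by
  refine norm_le_matOpNorm_of_mulVec_eq_smul (v := v ∘ e.symm) ?_ ?_
  · exact fun h0 => hv (funext fun x => by simpa using congrFun h0 (e x))
  · rw [reindex_apply, submatrix_mulVec_equiv, Equiv.symm_symm, Function.comp_assoc,
      Equiv.symm_comp_self, Function.comp_id, h]
    rfl

section IndepNum

variable {V : Type*} [Fintype V] (G : SimpleGraph V)

theorem exists_isIndepSet_card_eq_indepNum :
    ∃ S : Finset V, G.IsIndepSet S ∧ S.card = indepNum G := by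
  have hmem : indepNum G ∈
      {k | ∃ s : Finset V, (∀ a ∈ s, ∀ b ∈ s, ¬ G.Adj a b) ∧ s.card = k} :=
    Nat.sSup_mem ⟨0, ∅, by simp⟩ ⟨Fintype.card V, by rintro _ ⟨s, -, rfl⟩; exact s.card_le_univ⟩
  obtain ⟨S, hS, hcard⟩ := hmem
  exact ⟨S, fun a ha b hb _ => hS a ha b hb, hcard⟩

theorem indepNum_pos [Nonempty V] : 0 < indepNum G := by
  refine lt_of_lt_of_le Nat.zero_lt_one (le_csSup ⟨Fintype.card V, ?_⟩ ?_)
  · rintro _ ⟨s, -, rfl⟩; exact s.card_le_univ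
  · exact ⟨{Classical.arbitrary V}, by simp, Finset.card_singleton _⟩

end IndepNum

theorem stmt8 {V : Type*} [Fintype V] [Nonempty V] (G : SimpleGraph V) :
    ∃ (d : ℕ), 1 ≤ d ∧ ∃ (O : V → Matrix (Fin d) (Fin d) ℂ) (J : V → ℝ),
      (∀ a, (O a).IsHermitian) ∧
      (∀ a, O a * O a = 1) ∧
      (∀ a b, G.Adj a b → O a * O b = -(O b * O a)) ∧
      (∀ a b, a ≠ b → ¬ G.Adj a b → O a * O b = O b * O a) ∧
      (∑ a, J a ^ 2 = 1) ∧
      (indepNum G : ℝ) ≤ matOpNorm (∑ a, (J a : ℂ) • O a) ^ 2 := by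
  classical
  let : LinearOrder V := LinearOrder.lift' _ (Fintype.equivFin V).injective
  obtain ⟨S, hS, hcard⟩ := exists_isIndepSet_card_eq_indepNum G
  have hSne : S.Nonempty := Finset.card_pos.1 (hcard ▸ indepNum_pos G)
  let e := Fintype.equivFin (V → Fin 2)
  let φ := reindexAlgEquiv ℂ ℂ e
  refine ⟨_, Fintype.card_pos, fun a => φ (graphPauli ℂ G a), normalizedIndicator S,
    fun a => (graphPauli_isHermitian a).submatrix _,
    fun a => by rw [← map_mul, graphPauli_mul_self, map_one],
    fun a b h => by rw [← map_mul, graphPauli_anticommute h, map_neg, map_mul],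
    fun a b hab h => ((commute_graphPauli hab h).map φ).eq,
    sum_normalizedIndicator_sq hSne, ?_⟩
  have hmulVec : (∑ a, (normalizedIndicator S a : ℂ) • graphPauli ℂ G a) *ᵥ
      indepSetState ℂ S = (√S.card : ℂ) • indepSetState ℂ S := by
    rw [sum_smul_mulVec_of_mulVec_eq_self _ (fun a ha => by simp [normalizedIndicator, ha])
      fun a ha => graphPauli_mulVec_indepSetState hS ha, ← Complex.ofReal_sum,
      sum_normalizedIndicator]
  have hnorm :=
    norm_le_matOpNorm_reindex_of_mulVec_eq_smul e (indepSetState_ne_zero ℂ S) hmulVec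
  rw [Complex.norm_real, Real.norm_of_nonneg (Real.sqrt_nonneg _)] at hnorm
  simp only [← map_smul φ, ← map_sum]
  calc (indepNum G : ℝ) = √S.card ^ 2 := by rw [Real.sq_sqrt (Nat.cast_nonneg _), hcard]
    _ ≤ _ := pow_le_pow_left₀ (Real.sqrt_nonneg _) hnorm 2
end
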